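/- Let λ > 0, θ = arctan λ, φ = arctan(λ/2). Then for every real ψ: 1 − (2/(1+λ²))·cos(ψ − 2θ) + (6/√((1+λ²)(4+λ²)))·cos(ψ − θ + φ) = 1 + A_λ·cos(ψ − θ_λ), where A_λ = (2/(λ²+1))·√((16λ²+1)/(λ²+4)) and θ_λ = arctan( λ(λ²−5) / (2(2λ⁴+6λ²+1)) ). -/

import Mathlib

/-!
Each cosine `cos (ψ - α)` with `α` built from arctangents is `(cos ψ + tan α · sin ψ) / √(1 + tan² α)`,
so both sides are `1 + a cos ψ + b sin ψ` with `a, b` rational in `λ`. The square roots cancel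
because `(2(2λ⁴ + 6λ² + 1))² + λ²(λ² - 5)² = (16λ² + 1)(λ² + 4)(1 + λ²)²`.
-/

open Real

theorem cos_sub_arctan_add_arctan (ψ x y : ℝ) :
    cos (ψ - arctan x + arctan y)
      = ((1 + x * y) * cos ψ + (x - y) * sin ψ) / √((1 + x ^ 2) * (1 + y ^ 2)) := by
  have hx : 0 < √(1 + x ^ 2) := by positivity
  have hy : 0 < √(1 + y ^ 2) := by positivity
  rw [sqrt_mul (by positivity), cos_add, cos_sub, sin_sub, cos_arctan, sin_arctan,
    cos_arctan, sin_arctan]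
  field_simp
  ring

theorem cos_sub_arctan (ψ t : ℝ) :
    cos (ψ - arctan t) = (cos ψ + t * sin ψ) / √(1 + t ^ 2) := by
  simpa using cos_sub_arctan_add_arctan ψ t 0

theorem cos_sub_two_mul_arctan (ψ x : ℝ) :
    cos (ψ - 2 * arctan x) = ((1 - x ^ 2) * cos ψ + 2 * x * sin ψ) / (1 + x ^ 2) := by
  rw [show ψ - 2 * arctan x = ψ - arctan x + arctan (-x) by rw [arctan_neg]; ring,
    cos_sub_arctan_add_arctan, neg_sq, sqrt_mul_self (by positivity)]
  ring_nf

theorem one_add_sq_tan_phase (lam : ℝ) :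
    1 + (lam * (lam ^ 2 - 5) / (2 * (2 * lam ^ 4 + 6 * lam ^ 2 + 1))) ^ 2
      = (16 * lam ^ 2 + 1) / (lam ^ 2 + 4)
        * ((lam ^ 2 + 4) * (1 + lam ^ 2) / (2 * (2 * lam ^ 4 + 6 * lam ^ 2 + 1))) ^ 2 := by
  have : 0 < 2 * lam ^ 4 + 6 * lam ^ 2 + 1 := by positivity
  field_simp
  ring

theorem amplitude_phase_identity_general (lam : ℝ) (ψ : ℝ) :
    1 - (2 / (1 + lam ^ 2)) * Real.cos (ψ - 2 * Real.arctan lam)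
      + (6 / Real.sqrt ((1 + lam ^ 2) * (4 + lam ^ 2))) *
          Real.cos (ψ - Real.arctan lam + Real.arctan (lam / 2))
    = 1 + (2 / (lam ^ 2 + 1)) * Real.sqrt ((16 * lam ^ 2 + 1) / (lam ^ 2 + 4)) *
        Real.cos (ψ - Real.arctan (lam * (lam ^ 2 - 5) /
          (2 * (2 * lam ^ 4 + 6 * lam ^ 2 + 1)))) := by
  have hamp : 0 < √((16 * lam ^ 2 + 1) / (lam ^ 2 + 4)) := by positivity
  set q := (1 + lam ^ 2) * (1 + (lam / 2) ^ 2) with hq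
  have hdenom : √((1 + lam ^ 2) * (4 + lam ^ 2)) = 2 * √q := by
    rw [← sqrt_mul_self zero_le_two, ← sqrt_mul (mul_self_nonneg 2), hq]
    ring_nf
  have hq_sq : √q ^ 2 = q := sq_sqrt (by positivity)
  have hq_pos : 0 < √q := by positivity
  rw [cos_sub_two_mul_arctan, cos_sub_arctan_add_arctan, cos_sub_arctan, one_add_sq_tan_phase,
    sqrt_mul' _ (sq_nonneg _), sqrt_sq (by positivity), hdenom]
  generalize √q = r at hq_sq hq_pos
  field_simp
  rw [hq_sq, hq]
  ring

theorem amplitude_phase_identity (lam : ℝ) (hlam : 0 < lam) (ψ : ℝ) :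
    1 - (2 / (1 + lam ^ 2)) * Real.cos (ψ - 2 * Real.arctan lam)
      + (6 / Real.sqrt ((1 + lam ^ 2) * (4 + lam ^ 2))) *
          Real.cos (ψ - Real.arctan lam + Real.arctan (lam / 2))
    = 1 + (2 / (lam ^ 2 + 1)) * Real.sqrt ((16 * lam ^ 2 + 1) / (lam ^ 2 + 4)) *
        Real.cos (ψ - Real.arctan (lam * (lam ^ 2 - 5) /
          (2 * (2 * lam ^ 4 + 6 * lam ^ 2 + 1)))) :=
  amplitude_phase_identity_general lam ψ
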